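/- Let x be a real number of the form x = Σ_{i≥1} b_i·2^{−i}, where each b_i ∈ {0,1} and where for no index i does b_i = b_{i+1} = b_{i+2} (the binary digit sequence of x never has three equal consecutive digits). Then for every natural number j, the fractional part of 2^j·x lies in the interval [1/8, 7/8], and consequently −(1+√2) ≤ cot(2^j·π·x) ≤ 1+√2. (In particular, the sequence of points Q_j = (cot(2^{j−1}·π·x), 0) generated by repeatedly taking circumcenters with (0,1) and (0,−1) remains in the bounded segment between (−1−√2, 0) and (1+√2, 0).) -/
import Mathlib
open Real

lemma digit_le_one (c : ℕ → ℕ) (hb : ∀ i, c i = 0 ∨ c i = 1) (i : ℕ) : (c i : ℝ) ≤ 1 := by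
  rcases hb i with h | h <;> simp [h]

lemma summ (c : ℕ → ℕ) (hb : ∀ i, c i = 0 ∨ c i = 1) :
    Summable (fun i : ℕ => (c i : ℝ) / 2 ^ (i + 1)) := by
  refine Summable.of_nonneg_of_le (fun i => by positivity) (fun i => ?_) summable_geometric_two
  calc (c i : ℝ) / 2 ^ (i + 1) ≤ 1 / 2 ^ (i + 1) := by gcongr; exact digit_le_one c hb i
    _ = (1/2 : ℝ) ^ (i + 1) := by rw [div_pow, one_pow]
    _ ≤ (1/2 : ℝ) ^ i := pow_le_pow_of_le_one (by norm_num) (by norm_num) (by omega)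

lemma tail_bounds (c : ℕ → ℕ) (hb : ∀ i, c i = 0 ∨ c i = 1)
    (hno3 : ∀ i, ¬ (c i = c (i + 1) ∧ c (i + 1) = c (i + 2))) :
    (1/8 : ℝ) ≤ (∑' i : ℕ, (c i : ℝ) / 2 ^ (i + 1)) ∧
    (∑' i : ℕ, (c i : ℝ) / 2 ^ (i + 1)) ≤ 7/8 := by
  have hs := summ c hb
  constructor
  · have h3 := hno3 0
    norm_num at h3
    have h01 : c 0 = 1 ∨ c 1 = 1 ∨ c 2 = 1 := by
      rcases hb 0 with h0 | h0 <;> rcases hb 1 with h1 | h1 <;> rcases hb 2 with h2 | h2 <;> omega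
    rcases h01 with h | h | h
    · calc (1/8:ℝ) ≤ (c 0 : ℝ) / 2 ^ (0+1) := by rw [h]; norm_num
        _ ≤ _ := Summable.le_tsum hs 0 (fun i _ => by positivity)
    · calc (1/8:ℝ) ≤ (c 1 : ℝ) / 2 ^ (1+1) := by rw [h]; norm_num
        _ ≤ _ := Summable.le_tsum hs 1 (fun i _ => by positivity)
    · calc (1/8:ℝ) = (c 2 : ℝ) / 2 ^ (2+1) := by rw [h]; norm_num
        _ ≤ _ := Summable.le_tsum hs 2 (fun i _ => by positivity)
  · rw [← Summable.sum_add_tsum_nat_add 3 hs]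
    have hhead : ∑ i ∈ Finset.range 3, (c i : ℝ) / 2 ^ (i + 1) ≤ 3/4 := by
      rw [Finset.sum_range_succ, Finset.sum_range_succ, Finset.sum_range_one]
      have h3 := hno3 0
      norm_num at h3
      rcases hb 0 with h0 | h0 <;> rcases hb 1 with h1 | h1 <;> rcases hb 2 with h2 | h2 <;>
        simp_all <;> norm_num
    have hterm : ∀ i : ℕ, (c (i + 3) : ℝ) / 2 ^ (i + 3 + 1) ≤ (1/16 : ℝ) * (1/2)^i := by
      intro i
      calc (c (i + 3) : ℝ) / 2 ^ (i + 3 + 1) ≤ 1 / 2 ^ (i + 3 + 1) := by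
            gcongr; exact digit_le_one c hb _
        _ = (1/16 : ℝ) * (1/2)^i := by
            rw [show i + 3 + 1 = i + 4 from rfl, pow_add, div_pow, one_pow]
            field_simp
            ring
    have hsumm3 : Summable (fun i : ℕ => (c (i + 3) : ℝ) / 2 ^ (i + 3 + 1)) :=
      Summable.of_nonneg_of_le (fun i => by positivity) hterm
        (summable_geometric_two.mul_left _)
    have htail : (∑' i : ℕ, (c (i + 3) : ℝ) / 2 ^ (i + 3 + 1)) ≤ 1/8 := by
      calc (∑' i : ℕ, (c (i + 3) : ℝ) / 2 ^ (i + 3 + 1))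
          ≤ ∑' i : ℕ, (1/16 : ℝ) * (1/2)^i :=
            Summable.tsum_le_tsum hterm hsumm3 (summable_geometric_two.mul_left _)
        _ = 1/8 := by
            rw [tsum_mul_left, tsum_geometric_of_lt_one (by norm_num) (by norm_num)]
            norm_num
    linarith

lemma cot_pi_div_eight' : Real.cos (π/8) / Real.sin (π/8) = 1 + Real.sqrt 2 := by
  have hs : Real.sin (π/8) > 0 :=
    Real.sin_pos_of_pos_of_lt_pi (by positivity) (by linarith [pi_pos])
  have hc : Real.cos (π/8) > 0 := Real.cos_pos_of_mem_Ioo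
    ⟨by linarith [pi_pos], by linarith [pi_pos]⟩
  have hpyth := Real.sin_sq_add_cos_sq (π/8)
  have hdouble : Real.cos (π/4) = 2 * Real.cos (π/8)^2 - 1 := by
    rw [show (π/4 : ℝ) = 2 * (π/8) by ring, Real.cos_two_mul]
  rw [Real.cos_pi_div_four] at hdouble
  have h2 : Real.sqrt 2 ^ 2 = 2 := Real.sq_sqrt (by norm_num)
  have h2p : Real.sqrt 2 > 0 := Real.sqrt_pos.2 (by norm_num)
  have hc2 : Real.cos (π/8)^2 = (2 + Real.sqrt 2)/4 := by linarith
  have hs2 : Real.sin (π/8)^2 = (2 - Real.sqrt 2)/4 := by linarith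
  have hfac : (Real.cos (π/8) - (1 + Real.sqrt 2) * Real.sin (π/8)) *
      (Real.cos (π/8) + (1 + Real.sqrt 2) * Real.sin (π/8)) = 0 := by
    have expand : (Real.cos (π/8) - (1 + Real.sqrt 2) * Real.sin (π/8)) *
        (Real.cos (π/8) + (1 + Real.sqrt 2) * Real.sin (π/8))
        = Real.cos (π/8)^2 - (1 + 2*Real.sqrt 2 + Real.sqrt 2^2) * Real.sin (π/8)^2 := by ring
    rw [expand, h2, hc2, hs2]; ring_nf; nlinarith [h2]
  rcases mul_eq_zero.1 hfac with h | h
  · rw [div_eq_iff hs.ne']; linarith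
  · nlinarith

lemma cot_bounds {t : ℝ} (ht1 : 1/8 ≤ t) (ht2 : t ≤ 7/8) :
    -(1 + Real.sqrt 2) ≤ Real.cos (π * t) / Real.sin (π * t) ∧
    Real.cos (π * t) / Real.sin (π * t) ≤ 1 + Real.sqrt 2 := by
  have hpi := pi_pos
  have hs8 : Real.sin (π/8) > 0 :=
    Real.sin_pos_of_pos_of_lt_pi (by positivity) (by linarith)
  have hst : Real.sin (π * t) > 0 :=
    Real.sin_pos_of_pos_of_lt_pi (by nlinarith) (by nlinarith)
  constructor
  · -- cot(πt) ≥ cot(7π/8) = -(cos(π/8)/sin(π/8))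
    have hkey : Real.sin (7*π/8 - π * t) ≥ 0 := by
      apply Real.sin_nonneg_of_nonneg_of_le_pi <;> nlinarith
    rw [Real.sin_sub] at hkey
    have h7s : Real.sin (7*π/8) = Real.sin (π/8) := by
      rw [show (7*π/8 : ℝ) = π - π/8 by ring, Real.sin_pi_sub]
    have h7c : Real.cos (7*π/8) = -Real.cos (π/8) := by
      rw [show (7*π/8 : ℝ) = π - π/8 by ring, Real.cos_pi_sub]
    rw [h7s, h7c] at hkey
    rw [← cot_pi_div_eight', ← neg_div, div_le_div_iff₀ hs8 hst]
    nlinarith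
  · have hkey : Real.sin (π * t - π/8) ≥ 0 := by
      apply Real.sin_nonneg_of_nonneg_of_le_pi <;> nlinarith
    rw [Real.sin_sub] at hkey
    rw [← cot_pi_div_eight', div_le_div_iff₀ hst hs8]
    nlinarith

/-- If the binary digits b₀b₁b₂… of x never contain three equal consecutive digits,
then every fractional part of 2ʲ·x lies in [1/8, 7/8], and consequently
cot(2ʲ·π·x) always lies between -(1+√2) and 1+√2. -/
theorem no_three_equal_digits_bounded (b : ℕ → ℕ)
    (hb : ∀ i, b i = 0 ∨ b i = 1)
    (hno3 : ∀ i, ¬ (b i = b (i + 1) ∧ b (i + 1) = b (i + 2)))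
    (x : ℝ) (hx : x = ∑' i : ℕ, (b i : ℝ) / 2 ^ (i + 1)) :
    ∀ j : ℕ,
      Int.fract ((2 : ℝ) ^ j * x) ∈ Set.Icc (1 / 8 : ℝ) (7 / 8) ∧
      -(1 + Real.sqrt 2) ≤ Real.cot ((2 : ℝ) ^ j * π * x) ∧
      Real.cot ((2 : ℝ) ^ j * π * x) ≤ 1 + Real.sqrt 2 := by
  intro j
  set c : ℕ → ℕ := fun i => b (i + j) with hc
  have hcb : ∀ i, c i = 0 ∨ c i = 1 := fun i => hb (i + j)
  have hcno3 : ∀ i, ¬ (c i = c (i + 1) ∧ c (i + 1) = c (i + 2)) := by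
    intro i ⟨h1, h2⟩
    exact hno3 (i + j) ⟨by simpa [hc, add_right_comm] using h1,
      by simpa [hc, add_right_comm] using h2⟩
  set y : ℝ := ∑' i : ℕ, (c i : ℝ) / 2 ^ (i + 1) with hy
  obtain ⟨hy1, hy2⟩ := tail_bounds c hcb hcno3
  rw [← hy] at hy1 hy2
  have hsum := Summable.sum_add_tsum_nat_add (f := fun i : ℕ => (b i : ℝ) / 2 ^ (i + 1)) j (summ b hb)
  have hkey : (2:ℝ)^j * x = (∑ i ∈ Finset.range j, (b i : ℝ) * 2 ^ (j - i - 1)) + y := by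
    rw [hx, ← hsum, mul_add, Finset.mul_sum]
    congr 1
    · apply Finset.sum_congr rfl
      intro i hi
      rw [Finset.mem_range] at hi
      rw [mul_div_assoc', mul_comm ((2:ℝ)^j), mul_div_assoc,
        show (2:ℝ)^j / 2^(i+1) = 2^(j-i-1) by
          rw [div_eq_iff (by positivity), ← pow_add]; congr 1; omega]
    · rw [hy, ← tsum_mul_left]
      congr 1; ext i
      rw [hc]
      rw [mul_div_assoc', mul_comm ((2:ℝ)^j), mul_div_assoc,
        show (2:ℝ)^j / 2^(i+j+1) = 1/2^(i+1) by
          rw [div_eq_div_iff (by positivity) (by positivity), one_mul, ← pow_add]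
          congr 1; omega]
      ring
  have hN : ∃ N : ℤ, (∑ i ∈ Finset.range j, (b i : ℝ) * 2 ^ (j - i - 1)) = N := by
    refine ⟨∑ i ∈ Finset.range j, (b i : ℤ) * 2 ^ (j - i - 1), ?_⟩
    push_cast; rfl
  obtain ⟨N, hNe⟩ := hN
  have hfract : Int.fract ((2:ℝ)^j * x) = y := by
    rw [hkey, hNe, Int.fract_intCast_add, Int.fract_eq_self.2 ⟨by linarith, by linarith⟩]
  refine ⟨⟨by rw [hfract]; linarith, by rw [hfract]; linarith⟩, ?_⟩
  have hang : (2:ℝ)^j * π * x = π * y + N * π := by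
    rw [mul_comm ((2:ℝ)^j) π, mul_assoc, hkey, hNe]; ring
  have hcot : Real.cot ((2:ℝ)^j * π * x) = Real.cos (π * y) / Real.sin (π * y) := by
    rw [hang, Real.cot_eq_cos_div_sin, Real.cos_add_int_mul_pi, Real.sin_add_int_mul_pi,
      mul_div_mul_left _ _ (by positivity : ((-1:ℝ))^N ≠ 0)]
  rw [hcot]
  exact cot_bounds hy1 hy2
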